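/- arXiv:2112.14578 — 2 statements merged into one kernel-verified Lean document; each statement's English description precedes it below -/
import Mathlib

section
/- For each n ∈ ℕ let W_n be a nonempty set and let C_n, R_n : W_n → ℝ be functions that are bounded below on W_n. Suppose (i) there exists ξ₀ > 0 such that eventually in n, R_n(w) ≥ ξ₀ for all w ∈ W_n; (ii) for every ε > 0, eventually in n, |C_n(w) − R_n(w)| ≤ ε·R_n(w) for all w ∈ W_n; and (iii) for each n, ŵ_n ∈ W_n satisfies C_n(ŵ_n) ≤ C_n(w) for all w ∈ W_n. Then R_n(ŵ_n) / inf_{w ∈ W_n} R_n(w) → 1 as n → ∞. -/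
open Filter

/-- Deterministic-sequence version of Lemma 2: if eventually the risk is bounded below by
`ξ₀ > 0` uniformly on `W n`, and the criterion `C n` approximates the risk `R n` uniformly
in relative error that vanishes as `n → ∞`, then the risk of the criterion-minimizer,
divided by the infimum risk, tends to 1. -/
theorem risk_ratio_tendsto_one {α : Type*} (W : ℕ → Set α) (hW : ∀ n, (W n).Nonempty)
    (C R : ℕ → α → ℝ)
    (hCbdd : ∀ n, BddBelow (C n '' W n))
    (hRbdd : ∀ n, BddBelow (R n '' W n))
    (ξ₀ : ℝ) (hξ₀ : 0 < ξ₀)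
    (hR : ∀ᶠ n in atTop, ∀ w ∈ W n, ξ₀ ≤ R n w)
    (hCR : ∀ ε > 0, ∀ᶠ n in atTop, ∀ w ∈ W n, |C n w - R n w| ≤ ε * R n w)
    (what : ℕ → α) (hwhat : ∀ n, what n ∈ W n)
    (hmin : ∀ n, ∀ w ∈ W n, C n (what n) ≤ C n w) :
    Tendsto (fun n => R n (what n) / sInf (R n '' W n)) atTop (nhds 1) := by
  rw [Metric.tendsto_nhds]
  intro δ hδ
  set ε := min (1/2) (δ/8) with hεdef
  have hεpos : 0 < ε := lt_min (by norm_num) (by positivity)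
  have hεhalf : ε ≤ 1/2 := min_le_left _ _
  have hεδ : ε ≤ δ/8 := min_le_right _ _
  filter_upwards [hR, hCR ε hεpos] with n h1 h2
  set I := sInf (R n '' W n) with hIdef
  have hne : (R n '' W n).Nonempty := (hW n).image _
  have hIξ : ξ₀ ≤ I := le_csInf hne (by rintro _ ⟨w, hw, rfl⟩; exact h1 w hw)
  have hIpos : 0 < I := lt_of_lt_of_le hξ₀ hIξ
  have hle : I ≤ R n (what n) := csInf_le (hRbdd n) ⟨what n, hwhat n, rfl⟩
  have h1ε : (0:ℝ) < 1 - ε := by linarith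
  have h2ε : (0:ℝ) < 1 + ε := by linarith
  have key : ∀ w ∈ W n, (1 - ε) * R n (what n) ≤ (1 + ε) * R n w := by
    intro w hw
    have hA := (abs_le.1 (h2 (what n) (hwhat n))).1
    have hB := (abs_le.1 (h2 w hw)).2
    have hm := hmin n w hw
    nlinarith
  have hIlb : (1 - ε) * R n (what n) / (1 + ε) ≤ I := by
    apply le_csInf hne
    rintro _ ⟨w, hw, rfl⟩
    rw [div_le_iff₀ h2ε]
    nlinarith [key w hw]
  have hratio_lb : 1 ≤ R n (what n) / I := (one_le_div hIpos).2 hle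
  have hratio_ub : R n (what n) / I ≤ (1 + ε) / (1 - ε) := by
    rw [div_le_div_iff₀ hIpos h1ε]
    rw [div_le_iff₀ h2ε] at hIlb
    nlinarith
  have hub : (1 + ε) / (1 - ε) ≤ 1 + 4 * ε := by
    rw [div_le_iff₀ h1ε]
    nlinarith
  rw [Real.dist_eq, abs_sub_lt_iff]
  constructor <;> nlinarith
end

section
/- Let a, d, D ∈ ℝ with |d| ≤ D. Then (max(1 − (a + d), 0) − max(1 − a, 0) + d·𝟙{1 − a ≥ 0})² ≤ 4·d²·𝟙{|1 − a| ≤ D}, where 𝟙{·} denotes the indicator taking value 1 when the condition holds and 0 otherwise. -/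
/-- Pointwise variance bound (eq:22): the squared linearized hinge increment is bounded
by `4 d²` times the indicator that the margin is within `D` of zero. -/
theorem hinge_increment_sq_le (a d D : ℝ) (h : |d| ≤ D) :
    (max (1 - (a + d)) 0 - max (1 - a) 0
        + d * (if 1 - a ≥ 0 then (1 : ℝ) else 0)) ^ 2 ≤
      4 * d ^ 2 * (if |1 - a| ≤ D then (1 : ℝ) else 0) := by
  have hd1 : d ≤ |d| := le_abs_self d
  have hd2 : -|d| ≤ d := neg_abs_le d
  by_cases hD : |1 - a| ≤ D
  · simp only [hD, if_true, mul_one]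
    have h1 : |max (1 - (a + d)) 0 - max (1 - a) 0| ≤ |d| := by
      have := abs_max_sub_max_le_abs (1 - (a + d)) (1 - a) 0
      have e : |(1 - (a + d)) - (1 - a)| = |d| := by
        rw [show (1 - (a + d)) - (1 - a) = -d by ring, abs_neg]
      rwa [e] at this
    have h2 : |d * (if 1 - a ≥ 0 then (1 : ℝ) else 0)| ≤ |d| := by
      split
      · simp
      · simp [abs_nonneg]
    have h3 : |max (1 - (a + d)) 0 - max (1 - a) 0
        + d * (if 1 - a ≥ 0 then (1 : ℝ) else 0)| ≤ 2 * |d| := by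
      calc _ ≤ _ := abs_add_le _ _
        _ ≤ 2 * |d| := by linarith
    have := sq_abs d
    nlinarith [abs_nonneg (max (1 - (a + d)) 0 - max (1 - a) 0
        + d * (if 1 - a ≥ 0 then (1 : ℝ) else 0)), abs_nonneg d,
      sq_abs (max (1 - (a + d)) 0 - max (1 - a) 0
        + d * (if 1 - a ≥ 0 then (1 : ℝ) else 0)),
      mul_self_le_mul_self (abs_nonneg _) h3]
  · simp only [hD, if_false, mul_zero]
    push_neg at hD
    have hzero : max (1 - (a + d)) 0 - max (1 - a) 0
        + d * (if 1 - a ≥ 0 then (1 : ℝ) else 0) = 0 := by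
      rcases le_or_gt 0 (1 - a) with hpos | hneg
      · have habs : |1 - a| = 1 - a := abs_of_nonneg hpos
        rw [habs] at hD
        have h4 : 0 ≤ 1 - (a + d) := by linarith
        rw [if_pos hpos, max_eq_left h4, max_eq_left hpos]
        ring
      · have habs : |1 - a| = -(1 - a) := abs_of_neg hneg
        rw [habs] at hD
        have h4 : 1 - (a + d) ≤ 0 := by linarith
        rw [if_neg (not_le.mpr hneg), max_eq_right h4, max_eq_right hneg.le]
        ring
    rw [hzero]
    norm_num
end
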